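/- Let F be a field of characteristic ≠ 2 and α ∈ F with α ∉ {0, 1, −1}. In the algebra 3C(α), with 𝟙 := (α+1)⁻¹(x + y + z) and w := 𝟙 − x, the linear map τ_w : 3C(α) → 3C(α) determined on the basis {w, x, y−z} by τ_w(w) = w, τ_w(x) = x, τ_w(y − z) = −(y − z) is an algebra automorphism (it preserves multiplication), and τ_w(y) = z. (It is the Miyamoto involution of the axis w, exhibiting the skew axet X'(1+2).) -/
import Mathlib


/-- The multiplication of the algebra `3C(η)` in the basis `x = e 0`, `y = e 1`, `z = e 2`:
each basis vector is an idempotent and the product of two distinct basis vectors is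
`(η/2)` times (their sum minus the third one). -/
def mul3C {F : Type*} [Field F] (η : F) (u v : Fin 3 → F) : Fin 3 → F :=
  ![u 0 * v 0 + η/2 * (u 0*v 1 + u 1*v 0 + u 0*v 2 + u 2*v 0 - u 1*v 2 - u 2*v 1),
    u 1 * v 1 + η/2 * (u 0*v 1 + u 1*v 0 + u 1*v 2 + u 2*v 1 - u 0*v 2 - u 2*v 0),
    u 2 * v 2 + η/2 * (u 0*v 2 + u 2*v 0 + u 1*v 2 + u 2*v 1 - u 0*v 1 - u 1*v 0)]

/-- **The Miyamoto involution of the axis `w` in `3C(α)`.**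
Let `F` be a field of characteristic `≠ 2` and `α ∉ {0, 1, -1}`.  In the algebra `3C(α)`
(realized on `Fin 3 → F` with multiplication `mul3C α` and basis `x, y, z`), with
`𝟙 := (α+1)⁻¹ (x+y+z)` and `w := 𝟙 - x`, the linear map `τ_w` determined on the basis
`{w, x, y-z}` by `τ_w w = w`, `τ_w x = x`, `τ_w (y-z) = -(y-z)` is an algebra
automorphism, and `τ_w y = z`; it exhibits the skew axet `X'(1+2)`. -/
theorem threeC_miyamoto
    {F : Type*} [Field F] (hchar : (2 : F) ≠ 0)
    (α : F) (hα0 : α ≠ 0) (hα1 : α ≠ 1) (hαm1 : α ≠ -1)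
    (x y z one w : Fin 3 → F)
    (hx : x = ![1, 0, 0]) (hy : y = ![0, 1, 0]) (hz : z = ![0, 0, 1])
    (hone : one = (α + 1)⁻¹ • (x + y + z)) (hw : w = one - x) :
    ∃ τ : (Fin 3 → F) →ₗ[F] (Fin 3 → F),
      τ w = w ∧ τ x = x ∧ τ (y - z) = -(y - z) ∧
      (∀ u v : Fin 3 → F, τ (mul3C α u v) = mul3C α (τ u) (τ v)) ∧
      τ y = z := by
  refine ⟨{ toFun := fun u => ![u 0, u 2, u 1],
            map_add' := by intro u v; funext i; fin_cases i <;> simp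
            map_smul' := by intro c u; funext i; fin_cases i <;> simp },
          ?_, ?_, ?_, ?_, ?_⟩
  · subst hw hone hx hy hz
    funext i; fin_cases i <;> simp <;> ring
  · subst hx; funext i; fin_cases i <;> simp
  · subst hy hz; funext i; fin_cases i <;> simp
  · intro u v
    funext i; fin_cases i <;> simp [mul3C] <;> exact Or.inl (by ring)
  · subst hy hz; funext i; fin_cases i <;> simp
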